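/- Let δ ∈ (0, 1/2) and set α := (1 + log(1−δ))/(1 − log δ). If T1 is a balanced (unrooted) phylogenetic tree on n leaves and T2 is an arbitrary (unrooted) phylogenetic tree on the same leaf-set, then mast{T1, T2} ≥ α·log(2n/3). -/

import Mathlib

/-!
# Rooted binary phylogenetic trees

`RTree L` is the type of rooted binary trees with leaves labelled by elements of `L`:
every internal vertex has exactly two children (a left child and a right child), and
a tree with one leaf is a single vertex.
-/

inductive RTree (L : Type) : Type
  | leaf : L → RTree L
  | node : RTree L → RTree L → RTree L

namespace RTree

variable {L : Type}

/-- The list of leaf labels of a rooted binary tree, read from left to right. -/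
def leafList : RTree L → List L
  | leaf b => [b]
  | node l r => leafList l ++ leafList r

/-- The number of leaves of a rooted binary tree. -/
def numLeaves (T : RTree L) : ℕ := T.leafList.length

/-- The set of leaf labels of a rooted binary tree. -/
def leafSet (T : RTree L) : Set L := {b | b ∈ T.leafList}

/-- The height of a rooted binary tree: the maximum distance from the root to a leaf. -/
def height : RTree L → ℕ
  | leaf _ => 0
  | node l r => max (height l) (height r) + 1

/-- A rooted binary tree is balanced if all of its leaves are at the same distance
from the root. -/
def IsBalanced : RTree L → Prop
  | leaf _ => True
  | node l r => IsBalanced l ∧ IsBalanced r ∧ height l = height r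

/-- A rooted binary tree is phylogenetic if its leaves are labelled bijectively by a
finite set, i.e. all leaf labels are distinct. -/
def IsPhylo (T : RTree L) : Prop := T.leafList.Nodup

/-- `Embeds S T` is the subtree relation `S ⪯ T`: there is an injective map `f` from the
vertices of `S` to the vertices of `T` such that `f x = x` for every leaf `x` of `S`
(leaves being identified across trees by their labels) and
`f (x ∧ y) = f x ∧ f y` for all vertices `x`, `y` of `S`, where `∧` denotes the most
recent common ancestor.  Equivalently (for trees with distinct leaf labels), `S` is the
restriction of `T` to the leaf set of `S`, up to rooted isomorphism; this structural
characterization is taken as the definition. -/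
inductive Embeds : RTree L → RTree L → Prop
  | leaf (b : L) : Embeds (RTree.leaf b) (RTree.leaf b)
  | left {S l r : RTree L} : Embeds S l → Embeds S (RTree.node l r)
  | right {S l r : RTree L} : Embeds S r → Embeds S (RTree.node l r)
  | pair {s₁ s₂ l r : RTree L} :
      Embeds s₁ l → Embeds s₂ r → Embeds (RTree.node s₁ s₂) (RTree.node l r)
  | pair_swap {s₁ s₂ l r : RTree L} :
      Embeds s₁ r → Embeds s₂ l → Embeds (RTree.node s₁ s₂) (RTree.node l r)

/-- `mast T₁ T₂` is the maximum cardinality of a subset `X ⊆ L(T₁) ∩ L(T₂)` such that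
the restrictions `T₁|X` and `T₂|X` are isomorphic; equivalently, the maximum number of
leaves of a rooted binary phylogenetic tree `S` with `S ⪯ T₁` and `S ⪯ T₂`. -/
noncomputable def mast (T₁ T₂ : RTree L) : ℕ :=
  sSup {n | ∃ S : RTree L, S.IsPhylo ∧ Embeds S T₁ ∧ Embeds S T₂ ∧ S.numLeaves = n}

end RTree

/-!
# Unrooted binary phylogenetic trees, via rooted representatives

An unrooted binary phylogenetic tree (all internal vertices of degree 3) with at least
two leaves is represented by any rooted binary tree obtained from it by subdividing an
edge and rooting there; conversely, suppressing the (degree-2) root of a rooted binary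
tree yields an unrooted one.  Two rooted trees represent the same unrooted tree (i.e.
the unrooted trees are isomorphic by a graph isomorphism fixing every leaf label) iff
they are related by the equivalence relation `URel` generated by moving the root across
an edge together with (unordered) rooted isomorphism.
-/

namespace RTree

variable {L : Type}

/-- Rooted isomorphism of rooted binary trees, fixing all leaf labels (the two children
of a vertex are unordered). -/
inductive RIso : RTree L → RTree L → Prop
  | leaf (b : L) : RIso (RTree.leaf b) (RTree.leaf b)
  | pair {a b c d : RTree L} :
      RIso a c → RIso b d → RIso (RTree.node a b) (RTree.node c d)
  | pair_swap {a b c d : RTree L} :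
      RIso a d → RIso b c → RIso (RTree.node a b) (RTree.node c d)

/-- Moving the root of a rooted binary tree across one edge of the underlying unrooted
tree: this does not change the unrooted tree obtained by suppressing the root. -/
inductive RootMove : RTree L → RTree L → Prop
  | assoc (a b c : RTree L) :
      RootMove (RTree.node a (RTree.node b c)) (RTree.node (RTree.node a b) c)

/-- `URel S T` holds iff the unrooted binary trees obtained from `S` and `T` by
suppressing their roots are isomorphic by a graph isomorphism fixing every leaf label. -/
def URel (S T : RTree L) : Prop :=
  Relation.EqvGen (fun X Y => RootMove X Y ∨ RIso X Y) S T

/-- `umast T₁ T₂` is the maximum agreement subtree size of the *unrooted* binary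
phylogenetic trees represented by `T₁` and `T₂`: the maximum cardinality of a set
`X ⊆ L(T₁) ∩ L(T₂)` such that the unrooted restrictions `T₁|X` and `T₂|X` are
isomorphic (fixing leaf labels).  Equivalently, the maximum number of leaves of a
common unrooted subtree, given here by a pair of rooted representatives. -/
noncomputable def umast (T₁ T₂ : RTree L) : ℕ :=
  sSup {n | ∃ S₁ S₂ : RTree L, S₁.IsPhylo ∧ S₂.IsPhylo ∧
    Embeds S₁ T₁ ∧ Embeds S₂ T₂ ∧ URel S₁ S₂ ∧ S₁.numLeaves = n}

end RTree

namespace RTree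

variable {L : Type}

/-- An unrooted binary phylogenetic tree is in class `𝓑ₘ` if its center is a pair of
adjacent vertices and all leaves are at distance `m` from the center (it then has `2^m`
leaves).  Equivalently: rerooting it at its central edge yields a rooted tree whose two
subtrees are balanced of height `m - 1`. -/
def ClassB (m : ℕ) (T : RTree L) : Prop :=
  ∃ l r : RTree L, URel (RTree.node l r) T ∧
    l.IsBalanced ∧ r.IsBalanced ∧ l.height + 1 = m ∧ r.height + 1 = m

/-- An unrooted binary phylogenetic tree is in class `𝓒ₘ` if its center is a single
vertex and all leaves are at distance `m` from the center (it then has `3·2^(m-1)`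
leaves).  Equivalently: rerooting it at an edge incident to the center yields
`node a (node b c)` where the three branches `a`, `b`, `c` at the center are balanced
of height `m - 1`. -/
def ClassC (m : ℕ) (T : RTree L) : Prop :=
  ∃ a b c : RTree L, URel (RTree.node a (RTree.node b c)) T ∧
    a.IsBalanced ∧ b.IsBalanced ∧ c.IsBalanced ∧
    a.height + 1 = m ∧ b.height + 1 = m ∧ c.height + 1 = m

/-- An unrooted phylogenetic tree is balanced if all leaves are at the same distance
from its center: it is a single vertex, or lies in some class `𝓑ₘ` or `𝓒ₘ`. -/
def UBalanced (T : RTree L) : Prop :=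
  (∃ b : L, T = RTree.leaf b) ∨ ∃ m : ℕ, ClassB m T ∨ ClassC m T

end RTree

/-!
If a rooted binary tree `B` of height `h` shares `k ≥ 1` leaves with a tree `T`, then `B` and `T`
have an agreement subtree with `s` leaves where `2 log k ≤ h + 3 (s - 1)`.  When `k² ≤ 2^h` one leaf
suffices.  Otherwise both trees split at their roots into `B₁, B₂` and `T₁, T₂`, and one of three
descents applies: a child `Bᵢ` keeps `k / √2` of the common leaves (one unit of height pays for half
a unit of `log k`); or some quadrant `Bᵢ ∩ Tⱼ` keeps `k / 4` of them and a leaf of the opposite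
quadrant can be grafted on (one unit of height and one extra leaf pay for two units of `log k`); or
all common leaves lie below one child `Tⱼ`.

Rerooting a balanced unrooted tree on `n` leaves at (an edge next to) its center exposes a balanced
rooted subtree of height `m ≥ log (2n/3)` with `2^m` leaves, so `mast ≥ m/3 + 1`; and `α ≤ 1/3`
because `δ (1 - δ)³ ≤ 1/4`.
-/

open Finset

namespace RTree

variable {L : Type}

@[simp] lemma leafList_leaf (b : L) : (leaf b).leafList = [b] := rfl

@[simp] lemma leafList_node (l r : RTree L) :
    (node l r).leafList = l.leafList ++ r.leafList := rfl

@[simp] lemma numLeaves_leaf (b : L) : (leaf b).numLeaves = 1 := rfl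

@[simp] lemma numLeaves_node (l r : RTree L) :
    (node l r).numLeaves = l.numLeaves + r.numLeaves := by
  simp [numLeaves]

@[simp] lemma height_leaf (b : L) : (leaf b).height = 0 := rfl

@[simp] lemma height_node (l r : RTree L) :
    (node l r).height = max l.height r.height + 1 := rfl

lemma numLeaves_pos : ∀ T : RTree L, 0 < T.numLeaves
  | leaf _ => Nat.one_pos
  | node l _ => by simpa using Nat.add_pos_left (numLeaves_pos l) _

lemma IsBalanced.numLeaves_eq : ∀ {B : RTree L}, B.IsBalanced → B.numLeaves = 2 ^ B.height
  | leaf _, _ => rfl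
  | node _ _, ⟨hl, hr, hlr⟩ => by
    simp [hl.numLeaves_eq, hr.numLeaves_eq, hlr, pow_succ, mul_two]

lemma IsPhylo.node_leaf {S : RTree L} {y : L} (hS : S.IsPhylo) (hy : y ∉ S.leafList) :
    (node S (leaf y)).IsPhylo :=
  hS.append (List.nodup_singleton y) (List.disjoint_singleton.2 hy)

lemma IsPhylo.disjoint {l r : RTree L} (h : (node l r).IsPhylo) :
    l.leafList.Disjoint r.leafList :=
  List.disjoint_of_nodup_append h

section Embeds

variable {S T : RTree L}

lemma embeds_leaf {x : L} : ∀ {T : RTree L}, x ∈ T.leafList → Embeds (leaf x) T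
  | leaf _, h => by rw [List.mem_singleton.1 h]; exact .leaf _
  | node _ _, h => (List.mem_append.1 h).elim (.left ∘ embeds_leaf) (.right ∘ embeds_leaf)

lemma Embeds.subset (h : Embeds S T) : S.leafList ⊆ T.leafList := by
  induction h with
  | leaf => exact fun _ => id
  | left _ ih => exact fun _ hx => List.mem_append_left _ (ih hx)
  | right _ ih => exact fun _ hx => List.mem_append_right _ (ih hx)
  | pair _ _ ih₁ ih₂ =>
    intro x hx
    simp only [leafList_node, List.mem_append] at hx ⊢
    exact hx.imp (@ih₁ x) (@ih₂ x)
  | pair_swap _ _ ih₁ ih₂ =>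
    intro x hx
    simp only [leafList_node, List.mem_append] at hx ⊢
    exact (hx.imp (@ih₁ x) (@ih₂ x)).symm

lemma Embeds.numLeaves_le (hS : S.IsPhylo) (h : Embeds S T) : S.numLeaves ≤ T.numLeaves :=
  (List.subperm_of_subset hS h.subset).length_le

end Embeds

section Unrooted

variable {S X Y Z a b c : RTree L}

lemma RIso.refl : ∀ X : RTree L, RIso X X
  | RTree.leaf b => .leaf b
  | RTree.node l r => .pair (RIso.refl l) (RIso.refl r)

lemma RIso.symm (h : RIso X Y) : RIso Y X := by
  induction h with
  | leaf b => exact .leaf b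
  | pair _ _ ih₁ ih₂ => exact .pair ih₁ ih₂
  | pair_swap _ _ ih₁ ih₂ => exact .pair_swap ih₂ ih₁

lemma RIso.node_comm (a b : RTree L) : RIso (node a b) (node b a) :=
  .pair_swap (.refl a) (.refl b)

lemma RIso.perm (h : RIso X Y) : X.leafList.Perm Y.leafList := by
  induction h with
  | leaf => rfl
  | pair _ _ ih₁ ih₂ => exact ih₁.append ih₂
  | pair_swap _ _ ih₁ ih₂ => exact (ih₁.append ih₂).trans List.perm_append_comm

lemma RIso.embeds (h : RIso X Y) : Embeds S X → Embeds S Y := by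
  induction h generalizing S with
  | leaf => exact id
  | pair _ _ ih₁ ih₂ =>
    intro hS
    cases hS with
    | left hS => exact .left (ih₁ hS)
    | right hS => exact .right (ih₂ hS)
    | pair hS₁ hS₂ => exact .pair (ih₁ hS₁) (ih₂ hS₂)
    | pair_swap hS₁ hS₂ => exact .pair_swap (ih₂ hS₁) (ih₁ hS₂)
  | pair_swap _ _ ih₁ ih₂ =>
    intro hS
    cases hS with
    | left hS => exact .right (ih₁ hS)
    | right hS => exact .left (ih₂ hS)
    | pair hS₁ hS₂ => exact .pair_swap (ih₁ hS₁) (ih₂ hS₂)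
    | pair_swap hS₁ hS₂ => exact .pair (ih₂ hS₁) (ih₁ hS₂)

lemma URel.refl (X : RTree L) : URel X X := Relation.EqvGen.refl X

lemma URel.symm (h : URel X Y) : URel Y X := Relation.EqvGen.symm _ _ h

lemma URel.trans (h₁ : URel X Y) (h₂ : URel Y Z) : URel X Z :=
  Relation.EqvGen.trans _ _ _ h₁ h₂

lemma RIso.urel (h : RIso X Y) : URel X Y := .rel _ _ (.inr h)

lemma urel_assoc (a b c : RTree L) : URel (node a (node b c)) (node (node a b) c) :=
  .rel _ _ (.inl (.assoc a b c))

lemma URel.perm (h : URel X Y) : X.leafList.Perm Y.leafList := by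
  induction h with
  | rel _ _ h =>
    rcases h with ⟨a, b, c⟩ | h
    · simp only [leafList_node, List.append_assoc]; rfl
    · exact h.perm
  | refl => rfl
  | symm _ _ _ ih => exact ih.symm
  | trans _ _ _ _ _ ih₁ ih₂ => exact ih₁.trans ih₂

lemma exists_urel_embeds_assoc_of_pair {s₁ s₂ : RTree L} (h₁ : Embeds s₁ a)
    (h₂ : Embeds s₂ (node b c)) : ∃ S', URel (node s₁ s₂) S' ∧ Embeds S' (node (node a b) c) := by
  cases h₂ with
  | left g => exact ⟨_, .refl _, .left (.pair h₁ g)⟩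
  | right g => exact ⟨_, .refl _, .pair (.left h₁) g⟩
  | pair g₁ g₂ => exact ⟨_, urel_assoc _ _ _, .pair (.pair h₁ g₁) g₂⟩
  | pair_swap g₁ g₂ =>
    exact ⟨_, ((RIso.refl _).pair (RIso.node_comm _ _)).urel.trans (urel_assoc _ _ _),
      .pair (.pair h₁ g₂) g₁⟩

lemma exists_urel_embeds_assoc (h : Embeds S (node a (node b c))) :
    ∃ S', URel S S' ∧ Embeds S' (node (node a b) c) := by
  cases h with
  | left h => exact ⟨_, .refl _, .left (.left h)⟩
  | right h =>
    cases h with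
    | left h => exact ⟨_, .refl _, .left (.right h)⟩
    | right h => exact ⟨_, .refl _, .right h⟩
    | pair h₁ h₂ => exact ⟨_, .refl _, .pair (.right h₁) h₂⟩
    | pair_swap h₁ h₂ => exact ⟨_, .refl _, .pair_swap h₁ (.right h₂)⟩
  | pair h₁ h₂ => exact exists_urel_embeds_assoc_of_pair h₁ h₂
  | pair_swap h₁ h₂ =>
    obtain ⟨S', hS', hS'E⟩ := exists_urel_embeds_assoc_of_pair h₂ h₁
    exact ⟨S', (RIso.node_comm _ _).urel.trans hS', hS'E⟩

lemma exists_urel_embeds_assoc_symm (h : Embeds S (node (node a b) c)) :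
    ∃ S', URel S S' ∧ Embeds S' (node a (node b c)) := by
  obtain ⟨S', hS', hS'E⟩ :=
    exists_urel_embeds_assoc (((RIso.node_comm _ _).pair_swap (.refl c)).embeds h)
  exact ⟨S', hS', ((RIso.node_comm _ _).pair_swap (.refl a)).embeds hS'E⟩

lemma URel.exists_embeds (h : URel X Y) (hS : Embeds S X) :
    ∃ S', URel S S' ∧ Embeds S' Y := by
  suffices ∀ {X Y : RTree L}, URel X Y → ∀ S, (Embeds S X → ∃ S', URel S S' ∧ Embeds S' Y) ∧
      (Embeds S Y → ∃ S', URel S S' ∧ Embeds S' X) from (this h S).1 hS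
  intro X Y h
  induction h with
  | rel _ _ h =>
    rcases h with ⟨a, b, c⟩ | h
    · exact fun S => ⟨exists_urel_embeds_assoc, exists_urel_embeds_assoc_symm⟩
    · exact fun S => ⟨fun hS => ⟨S, .refl S, h.embeds hS⟩, fun hS => ⟨S, .refl S, h.symm.embeds hS⟩⟩
  | refl => exact fun S => ⟨fun hS => ⟨S, .refl S, hS⟩, fun hS => ⟨S, .refl S, hS⟩⟩
  | symm _ _ _ ih => exact fun S => (ih S).symm
  | trans _ _ _ _ _ ih₁ ih₂ =>
    refine fun S => ⟨fun hS => ?_, fun hS => ?_⟩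
    · obtain ⟨S₁, h₁, hS₁⟩ := (ih₁ S).1 hS
      obtain ⟨S₂, h₂, hS₂⟩ := (ih₂ S₁).1 hS₁
      exact ⟨S₂, h₁.trans h₂, hS₂⟩
    · obtain ⟨S₁, h₁, hS₁⟩ := (ih₂ S).2 hS
      obtain ⟨S₂, h₂, hS₂⟩ := (ih₁ S₁).2 hS₁
      exact ⟨S₂, h₁.trans h₂, hS₂⟩

lemma numLeaves_le_umast {T₁ T₂ S₁ S₂ : RTree L} (hS₁ : S₁.IsPhylo) (hS₂ : S₂.IsPhylo)
    (h₁ : Embeds S₁ T₁) (h₂ : Embeds S₂ T₂) (hU : URel S₁ S₂) :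
    S₁.numLeaves ≤ umast T₁ T₂ :=
  le_csSup ⟨T₁.numLeaves, fun _ ⟨_, _, hU₁, _, hE₁, _, _, hn⟩ => hn ▸ hE₁.numLeaves_le hU₁⟩
    ⟨S₁, S₂, hS₁, hS₂, h₁, h₂, hU, rfl⟩

end Unrooted

lemma quadrant_cases {k a b c d r₁ r₂ : ℕ} (hk : k ≤ r₁ + r₂) (h₁ : r₁ ≤ a + b)
    (h₂ : r₂ ≤ c + d) (hr₁ : 2 * r₁ ^ 2 < k ^ 2) (hr₂ : 2 * r₂ ^ 2 < k ^ 2) :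
    (0 < d ∧ k ≤ 4 * a) ∨ (0 < a ∧ k ≤ 4 * d) ∨ (0 < c ∧ k ≤ 4 * b) ∨ (0 < b ∧ k ≤ 4 * c) ∨
      (b = 0 ∧ d = 0) ∨ (a = 0 ∧ c = 0) := by
  have h₁' : k ≤ 4 * r₁ := by nlinarith
  have h₂' : k ≤ 4 * r₂ := by nlinarith
  omega

section Agreement

variable [DecidableEq L] {B B' B₁ B₂ T T' T₁ T₂ : RTree L}

def common (B T : RTree L) : Finset L := B.leafList.toFinset ∩ T.leafList.toFinset

lemma mem_common {y : L} : y ∈ common B T ↔ y ∈ B.leafList ∧ y ∈ T.leafList := by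
  simp [common]

lemma common_node_left : common (node B₁ B₂) T = common B₁ T ∪ common B₂ T := by
  simp [common, List.toFinset_append, union_inter_distrib_right]

lemma common_node_right : common B (node T₁ T₂) = common B T₁ ∪ common B T₂ := by
  simp [common, List.toFinset_append, inter_union_distrib_left]

lemma card_common_node_left_le :
    #(common (node B₁ B₂) T) ≤ #(common B₁ T) + #(common B₂ T) := by
  rw [common_node_left]; exact card_union_le _ _

lemma card_common_node_right_le :
    #(common B (node T₁ T₂)) ≤ #(common B T₁) + #(common B T₂) := by
  rw [common_node_right]; exact card_union_le _ _

lemma card_common_leaf_left_le (b : L) : #(common (leaf b) T) ≤ 1 :=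
  (card_le_card inter_subset_left).trans (by simp)

lemma card_common_leaf_right_le (t : L) : #(common B (leaf t)) ≤ 1 :=
  (card_le_card inter_subset_right).trans (by simp)

lemma card_common_eq_numLeaves (hB : B.IsPhylo) (h : B.leafList ⊆ T.leafList) :
    #(common B T) = B.numLeaves := by
  rw [common, inter_eq_left.2 (fun y hy => by simpa using h (List.mem_toFinset.1 hy)),
    List.toFinset_card_of_nodup hB, numLeaves]

lemma exists_mem_common (h : 0 < #(common B T)) : ∃ y ∈ B.leafList, y ∈ T.leafList := by
  obtain ⟨y, hy⟩ := card_pos.1 h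
  exact ⟨y, mem_common.1 hy⟩

/-- The bound `2 log k ≤ height B + 3 (s - 1)` in log-free form, where `k` is the number of
common leaves and `s` the size of the agreement subtree. -/
def HasLargeAgreement (B T : RTree L) : Prop :=
  ∃ S : RTree L, S.IsPhylo ∧ Embeds S B ∧ Embeds S T ∧
    #(common B T) ^ 2 * 8 ≤ 2 ^ B.height * 8 ^ S.numLeaves

lemma hasLargeAgreement_of_sq_le (hk : (common B T).Nonempty)
    (h : #(common B T) ^ 2 ≤ 2 ^ B.height) : HasLargeAgreement B T := by
  obtain ⟨y, hy⟩ := hk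
  rw [mem_common] at hy
  exact ⟨leaf y, List.nodup_singleton y, embeds_leaf hy.1, embeds_leaf hy.2, by simpa⟩

lemma HasLargeAgreement.of_child (h : HasLargeAgreement B' T)
    (hB : ∀ S, Embeds S B' → Embeds S B) (hh : B'.height + 1 ≤ B.height)
    (hk : #(common B T) ^ 2 ≤ 2 * #(common B' T) ^ 2) : HasLargeAgreement B T := by
  obtain ⟨S, hS, hSB, hST, hbound⟩ := h
  refine ⟨S, hS, hB S hSB, hST, ?_⟩
  calc #(common B T) ^ 2 * 8 ≤ 2 * (#(common B' T) ^ 2 * 8) := by omega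
    _ ≤ 2 * (2 ^ B'.height * 8 ^ S.numLeaves) := by gcongr
    _ = 2 ^ (B'.height + 1) * 8 ^ S.numLeaves := by ring
    _ ≤ 2 ^ B.height * 8 ^ S.numLeaves := by gcongr; norm_num

lemma HasLargeAgreement.of_common_eq (h : HasLargeAgreement B T')
    (hT : ∀ S, Embeds S T' → Embeds S T) (hk : common B T = common B T') :
    HasLargeAgreement B T := by
  obtain ⟨S, hS, hSB, hST, hbound⟩ := h
  exact ⟨S, hS, hSB, hT S hST, hk ▸ hbound⟩

lemma HasLargeAgreement.graft {y : L} (h : HasLargeAgreement B₁ T₁)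
    (hB : ∀ S, Embeds S B₁ → Embeds (node S (leaf y)) B)
    (hT : ∀ S, Embeds S T₁ → Embeds (node S (leaf y)) T) (hy : y ∉ B₁.leafList)
    (hh : B₁.height + 1 ≤ B.height) (hk : #(common B T) ≤ 4 * #(common B₁ T₁)) :
    HasLargeAgreement B T := by
  obtain ⟨S, hS, hSB, hST, hbound⟩ := h
  refine ⟨node S (leaf y), hS.node_leaf (fun hyS => hy (hSB.subset hyS)), hB S hSB, hT S hST, ?_⟩
  calc #(common B T) ^ 2 * 8 ≤ 16 * (#(common B₁ T₁) ^ 2 * 8) := by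
        have := Nat.pow_le_pow_left hk 2; nlinarith
    _ ≤ 16 * (2 ^ B₁.height * 8 ^ S.numLeaves) := by gcongr
    _ = 2 ^ (B₁.height + 1) * 8 ^ (node S (leaf y)).numLeaves := by simp; ring
    _ ≤ 2 ^ B.height * 8 ^ (node S (leaf y)).numLeaves := by gcongr; norm_num

lemma hasLargeAgreement_node_node (hB : (node B₁ B₂).IsPhylo)
    (ih₁ : ∀ T, (common B₁ T).Nonempty → HasLargeAgreement B₁ T)
    (ih₂ : ∀ T, (common B₂ T).Nonempty → HasLargeAgreement B₂ T)
    (ihT₁ : (common (node B₁ B₂) T₁).Nonempty → HasLargeAgreement (node B₁ B₂) T₁)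
    (ihT₂ : (common (node B₁ B₂) T₂).Nonempty → HasLargeAgreement (node B₁ B₂) T₂)
    (hk : 2 ^ (node B₁ B₂).height < #(common (node B₁ B₂) (node T₁ T₂)) ^ 2) :
    HasLargeAgreement (node B₁ B₂) (node T₁ T₂) := by
  have hdisj := hB.disjoint
  have hh₁ : B₁.height + 1 ≤ (node B₁ B₂).height := by simp
  have hh₂ : B₂.height + 1 ≤ (node B₁ B₂).height := by simp
  have hk₀ : 0 < #(common (node B₁ B₂) (node T₁ T₂)) :=
    Nat.pos_of_ne_zero fun h => by simp [h] at hk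
  by_cases hr₁ : #(common (node B₁ B₂) (node T₁ T₂)) ^ 2 ≤ 2 * #(common B₁ (node T₁ T₂)) ^ 2
  · exact (ih₁ _ (card_pos.1 (by nlinarith))).of_child (fun _ => .left) hh₁ hr₁
  by_cases hr₂ : #(common (node B₁ B₂) (node T₁ T₂)) ^ 2 ≤ 2 * #(common B₂ (node T₁ T₂)) ^ 2
  · exact (ih₂ _ (card_pos.1 (by nlinarith))).of_child (fun _ => .right) hh₂ hr₂
  rcases quadrant_cases card_common_node_left_le card_common_node_right_le
    card_common_node_right_le (not_le.1 hr₁) (not_le.1 hr₂) with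
    ⟨hd, hka⟩ | ⟨ha, hkd⟩ | ⟨hc, hkb⟩ | ⟨hb, hkc⟩ | ⟨hb, hd⟩ | ⟨ha, hc⟩
  · obtain ⟨y, hyB, hyT⟩ := exists_mem_common hd
    exact (ih₁ _ (card_pos.1 (by omega))).graft (fun _ h => .pair h (embeds_leaf hyB))
      (fun _ h => .pair h (embeds_leaf hyT)) (fun h => hdisj h hyB) hh₁ hka
  · obtain ⟨y, hyB, hyT⟩ := exists_mem_common ha
    exact (ih₂ _ (card_pos.1 (by omega))).graft (fun _ h => .pair_swap h (embeds_leaf hyB))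
      (fun _ h => .pair_swap h (embeds_leaf hyT)) (fun h => hdisj hyB h) hh₂ hkd
  · obtain ⟨y, hyB, hyT⟩ := exists_mem_common hc
    exact (ih₁ _ (card_pos.1 (by omega))).graft (fun _ h => .pair h (embeds_leaf hyB))
      (fun _ h => .pair_swap h (embeds_leaf hyT)) (fun h => hdisj h hyB) hh₁ hkb
  · obtain ⟨y, hyB, hyT⟩ := exists_mem_common hb
    exact (ih₂ _ (card_pos.1 (by omega))).graft (fun _ h => .pair_swap h (embeds_leaf hyB))
      (fun _ h => .pair h (embeds_leaf hyT)) (fun h => hdisj hyB h) hh₂ hkc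
  · have hT : common (node B₁ B₂) (node T₁ T₂) = common (node B₁ B₂) T₁ := by
      rw [common_node_right, common_node_left (T := T₂), card_eq_zero.1 hb, card_eq_zero.1 hd]
      simp
    exact (ihT₁ (card_pos.1 (hT ▸ hk₀))).of_common_eq (fun _ => .left) hT
  · have hT : common (node B₁ B₂) (node T₁ T₂) = common (node B₁ B₂) T₂ := by
      rw [common_node_right, common_node_left (T := T₁), card_eq_zero.1 ha, card_eq_zero.1 hc]
      simp
    exact (ihT₂ (card_pos.1 (hT ▸ hk₀))).of_common_eq (fun _ => .right) hT

theorem hasLargeAgreement (hB : B.IsPhylo) (hk : (common B T).Nonempty) :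
    HasLargeAgreement B T := by
  induction B generalizing T with
  | leaf b =>
    refine hasLargeAgreement_of_sq_le hk ?_
    have := card_common_leaf_left_le (T := T) b
    calc _ ≤ 1 := by nlinarith
      _ = _ := rfl
  | node B₁ B₂ ih₁ ih₂ =>
    have hB₁ : B₁.IsPhylo := hB.sublist (List.sublist_append_left _ _)
    have hB₂ : B₂.IsPhylo := hB.sublist (List.sublist_append_right _ _)
    induction T with
    | leaf t =>
      refine hasLargeAgreement_of_sq_le hk ?_
      have := card_common_leaf_right_le (B := node B₁ B₂) t
      calc _ ≤ 1 := by nlinarith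
        _ ≤ _ := Nat.one_le_two_pow
    | node T₁ T₂ ihT₁ ihT₂ =>
      by_cases hsmall : #(common (node B₁ B₂) (node T₁ T₂)) ^ 2 ≤ 2 ^ (node B₁ B₂).height
      · exact hasLargeAgreement_of_sq_le hk hsmall
      exact hasLargeAgreement_node_node hB (fun _ => ih₁ hB₁) (fun _ => ih₂ hB₂) ihT₁ ihT₂
        (not_le.1 hsmall)

end Agreement

lemma height_add_three_le_umast {W B T₁ T₂ : RTree L} (hWT : URel W T₁)
    (hBW : ∀ S, Embeds S B → Embeds S W) (hB : B.IsBalanced) (hBp : B.IsPhylo)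
    (hBT₂ : B.leafList ⊆ T₂.leafList) : B.height + 3 ≤ 3 * umast T₁ T₂ := by
  classical
  have hk : #(common B T₂) = 2 ^ B.height := by
    rw [card_common_eq_numLeaves hBp hBT₂, hB.numLeaves_eq]
  obtain ⟨S, hS, hSB, hST₂, hbound⟩ :=
    hasLargeAgreement hBp (card_pos.1 (hk ▸ Nat.two_pow_pos _))
  obtain ⟨S', hSS', hS'T₁⟩ := hWT.exists_embeds (hBW S hSB)
  have hs : S.numLeaves ≤ umast T₁ T₂ := by
    rw [numLeaves, hSS'.perm.length_eq]
    exact numLeaves_le_umast (hSS'.perm.nodup_iff.1 hS) hS hS'T₁ hST₂ hSS'.symm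
  have hpow : 2 ^ B.height * 2 ^ (B.height + 3) ≤ 2 ^ B.height * 2 ^ (3 * S.numLeaves) := by
    rw [hk] at hbound
    calc _ = (2 ^ B.height) ^ 2 * 8 := by ring
      _ ≤ 2 ^ B.height * 8 ^ S.numLeaves := hbound
      _ = _ := by rw [pow_mul]; norm_num
  have := (Nat.pow_le_pow_iff_right one_lt_two).1 (Nat.le_of_mul_le_mul_left hpow (by positivity))
  omega

lemma UBalanced.exists_balanced_subtree {T : RTree L} (hT : T.UBalanced) :
    ∃ W B : RTree L, URel W T ∧ (∀ S, Embeds S B → Embeds S W) ∧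
      B.leafList.Sublist W.leafList ∧ B.IsBalanced ∧ 2 * T.numLeaves ≤ 3 * 2 ^ B.height := by
  rcases hT with ⟨b, rfl⟩ | ⟨m, ⟨l, r, hU, hl, hr, hlm, hrm⟩ | ⟨a, b, c, hU, ha, hb, hc, ham, hbm, hcm⟩⟩
  · exact ⟨leaf b, leaf b, .refl _, fun _ => id, .refl _, trivial, by simp [numLeaves]⟩
  · have hB : (node l r).IsBalanced := ⟨hl, hr, by omega⟩
    refine ⟨node l r, node l r, hU, fun _ => id, .refl _, hB, ?_⟩
    rw [numLeaves, ← hU.perm.length_eq]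
    exact (congrArg (2 * ·) hB.numLeaves_eq).trans_le (by omega)
  · refine ⟨node a (node b c), node b c, hU, fun _ => .right, List.sublist_append_right _ _,
      ⟨hb, hc, by omega⟩, ?_⟩
    rw [numLeaves, ← hU.perm.length_eq]
    change 2 * (node a (node b c)).numLeaves ≤ _
    rw [numLeaves_node, numLeaves_node, ha.numLeaves_eq, hb.numLeaves_eq, hc.numLeaves_eq,
      height_node, show a.height = b.height by omega, show c.height = b.height by omega,
      max_self, pow_succ]
    omega

end RTree

lemma logb_two_mul_div_three_le {n m : ℕ} (hn : 0 < n) (h : 2 * n ≤ 3 * 2 ^ m) :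
    Real.logb 2 (2 * (n : ℝ) / 3) ≤ m := by
  have hn' : (0 : ℝ) < n := by exact_mod_cast hn
  rw [Real.logb_le_iff_le_rpow one_lt_two (by positivity), Real.rpow_natCast,
    div_le_iff₀ three_pos]
  exact_mod_cast h.trans_eq (mul_comm _ _)

lemma one_add_logb_div_one_sub_logb_mem_Icc {δ : ℝ} (hδ : δ ∈ Set.Ioo (0 : ℝ) (1 / 2)) :
    (1 + Real.logb 2 (1 - δ)) / (1 - Real.logb 2 δ) ∈ Set.Icc (0 : ℝ) (1 / 3) := by
  obtain ⟨hδ₀, hδ₁⟩ := hδ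
  have hden : 0 < 1 - Real.logb 2 δ := by
    linarith [Real.logb_neg one_lt_two hδ₀ (by linarith)]
  have hnum : 0 ≤ 1 + Real.logb 2 (1 - δ) := by
    have := Real.logb_le_logb_of_le one_lt_two (by norm_num) (by linarith : (1 / 2 : ℝ) ≤ 1 - δ)
    rw [one_div, Real.logb_inv, Real.logb_self_eq_one one_lt_two] at this
    linarith
  have hprod : Real.logb 2 δ + 3 * Real.logb 2 (1 - δ) ≤ -2 := by
    have hδ' : 0 < (1 - δ) ^ 3 := pow_pos (by linarith) 3
    have hle : δ * (1 - δ) ^ 3 ≤ 2⁻¹ ^ 2 := by nlinarith [sq_nonneg (δ - 1 / 2)]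
    have := Real.logb_le_logb_of_le one_lt_two (mul_pos hδ₀ hδ') hle
    rwa [Real.logb_mul hδ₀.ne' hδ'.ne', Real.logb_pow, Real.logb_pow, Real.logb_inv,
      Real.logb_self_eq_one one_lt_two, Nat.cast_ofNat, mul_neg_one] at this
  refine ⟨div_nonneg hnum hden.le, ?_⟩
  rw [div_le_iff₀ hden]
  linarith

theorem stmt_3_general {L : Type} (δ : ℝ) (hδ : δ ∈ Set.Ioo (0 : ℝ) (1/2))
    (T₁ T₂ : RTree L) (n : ℕ)
    (h₁ : T₁.IsPhylo) (hbal : RTree.UBalanced T₁)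
    (hL : T₁.leafSet = T₂.leafSet) (hn : T₁.numLeaves = n) :
    (1 + Real.logb 2 (1 - δ)) / (1 - Real.logb 2 δ) * Real.logb 2 (2 * (n : ℝ) / 3)
      ≤ (RTree.umast T₁ T₂ : ℝ) := by
  obtain ⟨hα₀, hα⟩ := one_add_logb_div_one_sub_logb_mem_Icc hδ
  obtain ⟨W, B, hWT, hBW, hBsub, hB, hn₃⟩ := hbal.exists_balanced_subtree
  have hBT₂ : B.leafList ⊆ T₂.leafList := fun y hy =>
    show y ∈ T₂.leafSet from hL ▸ hWT.perm.subset (hBsub.subset hy)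
  have hBp : B.IsPhylo := (hWT.perm.nodup_iff.2 h₁).sublist hBsub
  have hm := RTree.height_add_three_le_umast hWT hBW hB hBp hBT₂
  have hlog := logb_two_mul_div_three_le (hn ▸ T₁.numLeaves_pos) (hn ▸ hn₃)
  have hm' : (B.height : ℝ) + 3 ≤ 3 * RTree.umast T₁ T₂ := by exact_mod_cast hm
  calc _ ≤ (1 + Real.logb 2 (1 - δ)) / (1 - Real.logb 2 δ) * B.height := by gcongr
    _ ≤ 1 / 3 * B.height := by gcongr
    _ ≤ RTree.umast T₁ T₂ := by linarith

/-- Let `δ ∈ (0,1/2)` and `α := (1 + log(1-δ))/(1 - log δ)`.  If `T₁`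
is a balanced unrooted binary phylogenetic tree on `n` leaves and `T₂` is an arbitrary
unrooted binary phylogenetic tree on the same leaf set, then
`mast{T₁,T₂} ≥ α·log(2n/3)` (logarithms base 2). -/
theorem stmt_3 {L : Type} (δ : ℝ) (hδ : δ ∈ Set.Ioo (0 : ℝ) (1/2))
    (T₁ T₂ : RTree L) (n : ℕ)
    (h₁ : T₁.IsPhylo) (h₂ : T₂.IsPhylo) (hbal : RTree.UBalanced T₁)
    (hL : T₁.leafSet = T₂.leafSet) (hn : T₁.numLeaves = n) :
    (1 + Real.logb 2 (1 - δ)) / (1 - Real.logb 2 δ) * Real.logb 2 (2 * (n : ℝ) / 3)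
      ≤ (RTree.umast T₁ T₂ : ℝ) :=
  stmt_3_general δ hδ T₁ T₂ n h₁ hbal hL hn
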